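/- arXiv:2311.12937 — 8 statements merged into one kernel-verified Lean document; each statement's English description precedes it below -/
import Mathlib

section
/- The Taylor coefficients g_n(α) of f_α satisfy the recurrence g_{n+2}(α) = (2α g_{n+1}(α) + n g_n(α))/(n+2) for all n ≥ 0, with g_0(α) = 0 and g_1(α) = 1. -/
open Complex Set

/-- The 2-gon mapping `f_α(z) = (((1+z)/(1-z))^α - 1)/(2α)` (principal branch). -/
noncomputable def fgon (α : ℝ) (z : ℂ) : ℂ :=
  (((1 + z) / (1 - z)) ^ (α : ℂ) - 1) / (2 * α)

/-- The `n`-th Taylor coefficient of `f_α` at the origin. -/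
noncomputable def taylorCoeff (α : ℝ) (n : ℕ) : ℂ :=
  iteratedDeriv n (fgon α) 0 / n.factorial

/-!
With `w = (1+z)/(1-z)` one has `f_α' = w^α / ((1+z)(1-z))` and `1 + 2α f_α = w^α`, so near `0`
the function satisfies the linear ODE `(1 - z²) f' = 1 + 2α f`. Differentiating it `n + 1` times
at `0` with the Leibniz rule (only the second derivative of `z²` survives there) gives
`f⁽ⁿ⁺²⁾(0) - n(n+1) f⁽ⁿ⁾(0) = 2α f⁽ⁿ⁺¹⁾(0)`, and dividing by `(n+2)!` yields the recurrence.
-/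

open Filter Topology

section Leibniz

variable {𝕜 : Type*} [NontriviallyNormedField 𝕜]

/-- For `n < 2` the truncated `n - 2` is harmless: the factor `n * (n - 1)` vanishes. -/
theorem iteratedDeriv_sq_mul_zero {h : 𝕜 → 𝕜} {n : ℕ} (hh : ContDiffAt 𝕜 n h 0) :
    iteratedDeriv n (fun z => z ^ 2 * h z) 0 = n * (n - 1) * iteratedDeriv (n - 2) h 0 := by
  rw [iteratedDeriv_fun_mul (by fun_prop : ContDiffAt 𝕜 n (fun z : 𝕜 => z ^ 2) 0) hh]
  simp only [iteratedDeriv_fun_pow_zero, Nat.cast_ite, Nat.cast_zero, mul_ite, mul_zero,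
    ite_mul, zero_mul, Finset.sum_ite_eq', Finset.mem_range]
  split_ifs with hn
  · obtain ⟨m, rfl⟩ : ∃ m, n = m + 2 := ⟨n - 2, by omega⟩
    rw [← Nat.cast_mul, mul_comm ((m + 2).choose 2), ← Nat.descFactorial_eq_factorial_mul_choose]
    simp only [Nat.descFactorial, Nat.add_sub_cancel]
    push_cast
    ring
  · obtain _ | _ | n := n <;> simp_all

theorem iteratedDeriv_add_two_eq_of_ode {f : 𝕜 → 𝕜} {c : 𝕜} {n : ℕ}
    (hf : ContDiffAt 𝕜 (n + 2) f 0)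
    (hode : (fun z => (1 - z ^ 2) * deriv f z) =ᶠ[𝓝 0] fun z => 1 + c * f z) :
    iteratedDeriv (n + 2) f 0
      = c * iteratedDeriv (n + 1) f 0 + n * (n + 1) * iteratedDeriv n f 0 := by
  have hf' : ContDiffAt 𝕜 (n + 1) (deriv f) 0 := hf.derivWithin (by norm_cast)
  have hsq : iteratedDeriv (n + 1) (fun z => z ^ 2 * deriv f z) 0
      = n * (n + 1) * iteratedDeriv n f 0 := by
    rw [iteratedDeriv_sq_mul_zero hf']
    cases n with
    | zero => simp
    | succ k => push_cast; rw [← iteratedDeriv_succ']; ring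
  have hlhs : iteratedDeriv (n + 1) (fun z => (1 - z ^ 2) * deriv f z) 0
      = iteratedDeriv (n + 2) f 0 - n * (n + 1) * iteratedDeriv n f 0 := by
    simp_rw [sub_mul, one_mul]
    rw [iteratedDeriv_fun_sub hf' (by fun_prop), hsq, ← iteratedDeriv_succ']
  have hrhs : iteratedDeriv (n + 1) (fun z => 1 + c * f z) 0 = c * iteratedDeriv (n + 1) f 0 := by
    rw [iteratedDeriv_const_add n.succ_pos, iteratedDeriv_const_mul_field]
  linear_combination hlhs.symm.trans ((hode.iteratedDeriv_eq (n + 1)).trans hrhs)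

end Leibniz

lemma one_add_two_mul_fgon {α : ℝ} (hα : α ≠ 0) (z : ℂ) :
    1 + 2 * α * fgon α z = ((1 + z) / (1 - z)) ^ (α : ℂ) := by
  have : (α : ℂ) ≠ 0 := ofReal_ne_zero.2 hα
  rw [fgon]
  field_simp
  ring

lemma hasDerivAt_fgon {α : ℝ} (hα : α ≠ 0) {z : ℂ} (hz : (1 + z) / (1 - z) ∈ slitPlane) :
    HasDerivAt (fgon α) (((1 + z) / (1 - z)) ^ (α : ℂ) / ((1 + z) * (1 - z))) z := by
  obtain ⟨hplus, hminus⟩ := div_ne_zero_iff.1 (slitPlane_ne_zero hz)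
  have hw : HasDerivAt (fun z : ℂ => (1 + z) / (1 - z)) (2 / (1 - z) ^ 2) z := by
    refine (((hasDerivAt_id z).const_add 1).div
      ((hasDerivAt_id z).const_sub 1) hminus).congr_deriv ?_
    simp only [id]
    ring
  refine (((hw.cpow_const hz).sub_const 1).div_const (2 * α)).congr_deriv ?_
  have : (α : ℂ) ≠ 0 := ofReal_ne_zero.2 hα
  rw [cpow_sub _ _ (div_ne_zero hplus hminus), cpow_one]
  field_simp

lemma eventually_one_add_div_one_sub_mem_slitPlane :
    ∀ᶠ z in 𝓝 (0 : ℂ), (1 + z) / (1 - z) ∈ slitPlane := by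
  have hcont : ContinuousAt (fun z : ℂ => (1 + z) / (1 - z)) 0 := by fun_prop (disch := simp)
  exact hcont.eventually_mem (isOpen_slitPlane.mem_nhds (by simp))

lemma fgon_ode {α : ℝ} (hα : α ≠ 0) :
    (fun z => (1 - z ^ 2) * deriv (fgon α) z) =ᶠ[𝓝 0] fun z => 1 + 2 * α * fgon α z := by
  filter_upwards [eventually_one_add_div_one_sub_mem_slitPlane] with z hz
  obtain ⟨hplus, hminus⟩ := div_ne_zero_iff.1 (slitPlane_ne_zero hz)
  rw [(hasDerivAt_fgon hα hz).deriv, one_add_two_mul_fgon hα,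
    show 1 - z ^ 2 = (1 + z) * (1 - z) by ring, mul_div_cancel₀ _ (mul_ne_zero hplus hminus)]

lemma analyticAt_fgon_zero (α : ℝ) : AnalyticAt ℂ (fgon α) 0 := by
  have hw : AnalyticAt ℂ (fun z : ℂ => (1 + z) / (1 - z)) 0 := by fun_prop (disch := simp)
  exact ((hw.cpow analyticAt_const (by simp)).sub analyticAt_const).div_const

theorem stmt1 (α : ℝ) (hα : α ∈ Set.Ioo (0:ℝ) 1) :
    taylorCoeff α 0 = 0 ∧ taylorCoeff α 1 = 1 ∧
    ∀ n : ℕ, taylorCoeff α (n + 2)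
      = (2 * α * taylorCoeff α (n + 1) + n * taylorCoeff α n) / (n + 2) := by
  have hα0 : α ≠ 0 := hα.1.ne'
  refine ⟨by simp [taylorCoeff, fgon], ?_, fun n => ?_⟩
  · simp [taylorCoeff, (hasDerivAt_fgon hα0 (z := 0) (by simp)).deriv]
  · have hrec := iteratedDeriv_add_two_eq_of_ode (n := n)
      (analyticAt_fgon_zero α).contDiffAt (fgon_ode hα0)
    rw [taylorCoeff, hrec, taylorCoeff, taylorCoeff, Nat.factorial_succ, Nat.factorial_succ]
    push_cast
    field_simp
    ring
end

section
/- For every n ≥ 2, the Taylor coefficient g_n(α) equals (1/(2α)) · Σ_{k=1}^{n} 2^k · binom(α, k) · binom(n-1, n-k), where binom(α,k) is the generalized binomial coefficient. -/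
open Complex Set Finset

/-- Generalized binomial coefficient `binom(α, k) = α(α-1)⋯(α-k+1)/k!`. -/
noncomputable def genBinom (α : ℂ) (k : ℕ) : ℂ :=
  (∏ j ∈ Finset.range k, (α - j)) / k.factorial


/-!
Put `u = ((1 + z) / (1 - z)) ^ α`, so that `f_α = (u - 1) / (2α)` and `(1 - z²) u' = 2α u`.
Differentiating this equation `n + 1` times at `0` shows that the Taylor coefficients `c n` of `u`
satisfy `(n + 2) c (n + 2) = 2α c (n + 1) + n c n`, with `c 1 = 2α`. The binomial sums satisfy the
same recurrence, by `(k + 1) binom(α, k + 1) = (α - k) binom(α, k)` and a Pascal-type identity, and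
the recurrence determines `c 1, c 2, …` from `c 1`.
-/

open Topology

section CoeffRecurrence

variable {K : Type*} [Field K]

/-- The recurrence satisfied by the Taylor coefficients at `0` of a solution of
`(1 - z ^ 2) * f' z = a * f z`. -/
def CoeffRecurrence (a : K) (x : ℕ → K) : Prop :=
  ∀ n : ℕ, (n + 2) * x (n + 2) = a * x (n + 1) + n * x n

theorem CoeffRecurrence.apply_succ_eq [CharZero K] {a : K} {x y : ℕ → K}
    (hx : CoeffRecurrence a x) (hy : CoeffRecurrence a y) (h1 : x 1 = y 1) (n : ℕ) :
    x (n + 1) = y (n + 1) := by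
  induction n using Nat.strong_induction_on with
  | _ n ih =>
    rcases n with _ | m
    · exact h1
    have hm : (m : K) * x m = m * y m := by
      rcases m with _ | k
      · simp
      · rw [ih k (by omega)]
    have hm2 : (m + 2 : K) ≠ 0 := by exact_mod_cast (show m + 2 ≠ 0 by omega)
    refine mul_left_cancel₀ hm2 ?_
    rw [hx m, hy m, ih m (by omega), hm]

end CoeffRecurrence

section IteratedDerivAtZero

variable {𝕜 : Type*} [NontriviallyNormedField 𝕜]

theorem iteratedDeriv_sq_mul_at_zero {g : 𝕜 → 𝕜} {n : ℕ} (hg : ContDiffAt 𝕜 n g 0) :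
    iteratedDeriv n (fun z => z ^ 2 * g z) 0 = n * (n - 1) * iteratedDeriv (n - 2) g 0 := by
  rw [iteratedDeriv_fun_mul (by fun_prop) hg]
  simp only [iteratedDeriv_fun_pow_zero, Nat.cast_ite, Nat.cast_zero, mul_ite, ite_mul, mul_zero,
    zero_mul, Finset.sum_ite_eq', Finset.mem_range]
  split_ifs with h
  · rw [← Nat.cast_descFactorial_two, Nat.descFactorial_eq_factorial_mul_choose]
    push_cast
    ring
  · obtain rfl | rfl : n = 0 ∨ n = 1 := by omega
    all_goals simp

variable [CompleteSpace 𝕜]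

theorem iteratedDeriv_add_two_of_ode {f : 𝕜 → 𝕜} {a : 𝕜} (hf : AnalyticAt 𝕜 f 0)
    (hode : ∀ᶠ z in 𝓝 0, (1 - z ^ 2) * deriv f z = a * f z) (n : ℕ) :
    iteratedDeriv (n + 2) f 0 =
      a * iteratedDeriv (n + 1) f 0 + (n + 1) * n * iteratedDeriv n f 0 := by
  have hderiv : deriv f =ᶠ[𝓝 0] fun z => a * f z + z ^ 2 * deriv f z := by
    filter_upwards [hode] with z hz
    linear_combination hz
  have hf' : ContDiffAt 𝕜 (n + 1 : ℕ) f 0 := hf.contDiffAt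
  have hf'' : ContDiffAt 𝕜 (n + 1 : ℕ) (deriv f) 0 := hf.deriv.contDiffAt
  rw [iteratedDeriv_succ', hderiv.iteratedDeriv_eq,
    iteratedDeriv_fun_add (by fun_prop) (by fun_prop), iteratedDeriv_const_mul_field,
    iteratedDeriv_sq_mul_at_zero hf'']
  rcases n with _ | m
  · simp
  · rw [show m + 1 + 1 - 2 = m by omega, ← iteratedDeriv_succ']
    push_cast
    ring

theorem coeffRecurrence_of_ode [CharZero 𝕜] {f : 𝕜 → 𝕜} {a : 𝕜} (hf : AnalyticAt 𝕜 f 0)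
    (hode : ∀ᶠ z in 𝓝 0, (1 - z ^ 2) * deriv f z = a * f z) :
    CoeffRecurrence a (fun n => iteratedDeriv n f 0 / n.factorial) := by
  intro n
  dsimp only
  rw [iteratedDeriv_add_two_of_ode hf hode n, Nat.factorial_succ (n + 1), Nat.factorial_succ n]
  have h0 : (n.factorial : 𝕜) ≠ 0 := Nat.cast_ne_zero.mpr n.factorial_ne_zero
  have h1 : (n + 1 : 𝕜) ≠ 0 := by exact_mod_cast n.succ_ne_zero
  have h2 : (n + 2 : 𝕜) ≠ 0 := by exact_mod_cast (n + 1).succ_ne_zero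
  push_cast
  rw [add_assoc (n : 𝕜) 1 1, one_add_one_eq_two]
  field_simp

end IteratedDerivAtZero

noncomputable def cayleyPow (a z : ℂ) : ℂ := ((1 + z) / (1 - z)) ^ a

theorem one_add_div_one_sub_mem_slitPlane {z : ℂ} (hz : ‖z‖ < 1) :
    (1 + z) / (1 - z) ∈ slitPlane := by
  have h1 : 1 - z ≠ 0 := sub_ne_zero.mpr fun h => by simp [← h] at hz
  left
  rw [div_re, ← add_div]
  apply div_pos _ (normSq_pos.mpr h1)
  have hn : normSq z < 1 := by
    rw [← Complex.sq_norm]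
    nlinarith [norm_nonneg z]
  rw [normSq_apply] at hn
  simp only [add_re, one_re, sub_re, add_im, one_im, sub_im]
  nlinarith

theorem analyticAt_cayleyPow (a : ℂ) : AnalyticAt ℂ (cayleyPow a) 0 := by
  refine AnalyticAt.cpow ?_ analyticAt_const (by simp)
  exact (analyticAt_const.add analyticAt_id).div (analyticAt_const.sub analyticAt_id) (by simp)

theorem one_sub_sq_mul_deriv_cayleyPow (a : ℂ) {z : ℂ} (hz : ‖z‖ < 1) :
    (1 - z ^ 2) * deriv (cayleyPow a) z = 2 * a * cayleyPow a z := by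
  have h1 : 1 - z ≠ 0 := sub_ne_zero.mpr fun h => by simp [← h] at hz
  have h2 : 1 + z ≠ 0 := fun h => by simp [eq_neg_of_add_eq_zero_right h] at hz
  have hmob : HasDerivAt (fun z : ℂ => (1 + z) / (1 - z)) (2 / (1 - z) ^ 2) z :=
    (((hasDerivAt_id' z).const_add 1).fun_div ((hasDerivAt_id' z).const_sub 1) h1).congr_deriv
      (by ring)
  have hu : HasDerivAt (cayleyPow a) _ z :=
    hmob.cpow_const (c := a) (one_add_div_one_sub_mem_slitPlane hz)
  rw [hu.deriv, cayleyPow, cpow_sub _ _ (div_ne_zero h2 h1), cpow_one]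
  field_simp
  ring

theorem genBinom_succ (a : ℂ) (k : ℕ) :
    (k + 1) * genBinom a (k + 1) = (a - k) * genBinom a k := by
  rw [genBinom, genBinom, Finset.prod_range_succ, Nat.factorial_succ]
  push_cast
  field_simp

theorem two_mul_pow_mul_genBinom (a : ℂ) (k : ℕ) :
    2 * a * (2 ^ k * genBinom a k) =
      (k + 1) * (2 ^ (k + 1) * genBinom a (k + 1)) + 2 * k * (2 ^ k * genBinom a k) := by
  linear_combination -2 ^ (k + 1) * genBinom_succ a k

theorem Nat.add_three_mul_choose (n j : ℕ) :
    (n + 3) * (n + 2).choose (j + 1) =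
      (j + 2) * (n + 1).choose j + 2 * (j + 2) * (n + 1).choose (j + 1)
        + (n + 1) * n.choose (j + 1) := by
  have h1 : (n + 3) * (n + 2).choose (j + 1) = (n + 3).choose (j + 2) * (j + 2) :=
    Nat.add_one_mul_choose_eq (n + 2) (j + 1)
  have h2 : (n + 1) * n.choose (j + 1) = (n + 1).choose (j + 2) * (j + 2) :=
    Nat.add_one_mul_choose_eq n (j + 1)
  have h3 : (n + 3).choose (j + 2) =
      (n + 1).choose j + 2 * (n + 1).choose (j + 1) + (n + 1).choose (j + 2) := by
    simp only [Nat.choose_succ_succ]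
    ring
  rw [h1, h2, h3]
  ring

noncomputable def cayleyCoeff (a : ℂ) (n : ℕ) : ℂ :=
  ∑ k ∈ Icc 1 n, 2 ^ k * genBinom a k * (n - 1).choose (n - k)

theorem cayleyCoeff_succ_eq_sum_range (a : ℂ) {m N : ℕ} (hN : m < N) :
    cayleyCoeff a (m + 1) = ∑ j ∈ range N, 2 ^ (j + 1) * genBinom a (j + 1) * m.choose j := by
  rw [cayleyCoeff, ← Finset.Ico_add_one_right_eq_Icc, sum_Ico_eq_sum_range, Nat.add_sub_cancel,
    Nat.add_sub_cancel, ← sum_subset (range_subset_range.mpr hN)]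
  · refine sum_congr rfl fun j hj => ?_
    rw [Finset.mem_range] at hj
    rw [add_comm 1 j, Nat.add_sub_add_right, Nat.choose_symm (by omega)]
  · intro j _ hj
    rw [Finset.mem_range, not_lt] at hj
    simp [Nat.choose_eq_zero_of_lt (show m < j by omega)]

theorem cayleyCoeff_add_three (a : ℂ) (m : ℕ) :
    (m + 3) * cayleyCoeff a (m + 3) =
      2 * a * cayleyCoeff a (m + 2) + (m + 1) * cayleyCoeff a (m + 1) := by
  set b : ℕ → ℂ := fun k => 2 ^ k * genBinom a k
  have hrep : ∀ i ≤ m + 2, cayleyCoeff a (i + 1) = ∑ j ∈ range (m + 3), b (j + 1) * i.choose j :=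
    fun i hi => cayleyCoeff_succ_eq_sum_range a (by omega)
  have hb_rec (j : ℕ) : 2 * a * b (j + 1) = (j + 2) * b (j + 2) + 2 * (j + 1) * b (j + 1) := by
    have h := two_mul_pow_mul_genBinom a (j + 1)
    push_cast at h
    linear_combination h
  have hchoose (j : ℕ) : ((m + 3) * (m + 2).choose (j + 1) : ℂ) =
      (j + 2) * (m + 1).choose j + 2 * (j + 2) * (m + 1).choose (j + 1)
        + (m + 1) * m.choose (j + 1) := by
    exact_mod_cast Nat.add_three_mul_choose m j
  have hshift : ∑ j ∈ range (m + 3), (j + 2) * b (j + 2) * (m + 1).choose j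
      = ∑ j ∈ range (m + 2), (j + 2) * b (j + 2) * (m + 1).choose j := by
    rw [sum_range_succ, Nat.choose_eq_zero_of_lt (by omega), Nat.cast_zero, mul_zero, add_zero]
  rw [hrep (m + 2) le_rfl, hrep (m + 1) (by omega), hrep m (by omega), mul_sum, mul_sum, mul_sum,
    ← sum_add_distrib]
  -- Expanding `2 a b (j + 1)` by `hb_rec` produces a sum shifted by one index; after peeling off
  -- `j = 0` the left-hand side matches it term by term through `hchoose`.
  calc ∑ j ∈ range (m + 3), (m + 3 : ℂ) * (b (j + 1) * (m + 2).choose j)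
      = ∑ j ∈ range (m + 3), (j + 2) * b (j + 2) * (m + 1).choose j
        + ∑ j ∈ range (m + 3),
            (2 * (j + 1) * (m + 1).choose j + (m + 1) * m.choose j) * b (j + 1) := by
        rw [hshift, sum_range_succ', sum_range_succ' _ (m + 2), ← add_assoc, ← sum_add_distrib]
        congr 1
        · refine sum_congr rfl fun j _ => ?_
          push_cast
          linear_combination b (j + 2) * hchoose j
        · simp only [Nat.choose_zero_right, Nat.cast_one, Nat.cast_zero]
          ring
    _ = _ := by
        rw [← sum_add_distrib]
        refine sum_congr rfl fun j _ => ?_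
        linear_combination -((m + 1).choose j : ℂ) * hb_rec j

theorem cayleyCoeff_one (a : ℂ) : cayleyCoeff a 1 = 2 * a := by
  simp [cayleyCoeff, genBinom]

theorem coeffRecurrence_cayleyCoeff (a : ℂ) : CoeffRecurrence (2 * a) (cayleyCoeff a) := by
  rintro (_ | m)
  · rw [cayleyCoeff_succ_eq_sum_range a (show 1 < 2 by norm_num), cayleyCoeff_one]
    simp [genBinom, Finset.sum_range_succ, Finset.prod_range_succ]
    ring
  · push_cast
    linear_combination cayleyCoeff_add_three a m

theorem taylorCoeff_cayleyPow_succ (a : ℂ) (n : ℕ) :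
    iteratedDeriv (n + 1) (cayleyPow a) 0 / (n + 1).factorial = cayleyCoeff a (n + 1) := by
  have hode : ∀ᶠ z in 𝓝 0, (1 - z ^ 2) * deriv (cayleyPow a) z = 2 * a * cayleyPow a z := by
    filter_upwards [Metric.ball_mem_nhds (0 : ℂ) one_pos] with z hz
    exact one_sub_sq_mul_deriv_cayleyPow a (mem_ball_zero_iff.mp hz)
  refine (coeffRecurrence_of_ode (analyticAt_cayleyPow a) hode).apply_succ_eq
    (coeffRecurrence_cayleyCoeff a) ?_ n
  have h0 : deriv (cayleyPow a) 0 = 2 * a := by simpa [cayleyPow] using hode.self_of_nhds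
  simp [iteratedDeriv_one, cayleyCoeff_one, h0]

theorem taylorCoeff_eq_inv_mul (α : ℝ) {n : ℕ} (hn : n ≠ 0) :
    taylorCoeff α n = (2 * (α : ℂ))⁻¹ * (iteratedDeriv n (cayleyPow α) 0 / n.factorial) := by
  have hf : fgon α = fun z => (2 * α : ℂ)⁻¹ * (-1 + cayleyPow α z) := by
    ext z
    rw [fgon, cayleyPow, div_eq_inv_mul, neg_add_eq_sub]
  rw [taylorCoeff, hf, iteratedDeriv_const_mul_field,
    iteratedDeriv_const_add (Nat.pos_of_ne_zero hn), mul_div_assoc]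

theorem stmt2_general (α : ℝ) (n : ℕ) (hn : 2 ≤ n) :
    taylorCoeff α n = (1 / (2 * α)) *
      ∑ k ∈ Finset.Icc 1 n, (2:ℂ) ^ k * genBinom α k * (Nat.choose (n-1) (n-k)) := by
  obtain ⟨m, rfl⟩ : ∃ m, n = m + 1 := ⟨n - 1, by omega⟩
  rw [taylorCoeff_eq_inv_mul α m.succ_ne_zero, taylorCoeff_cayleyPow_succ, one_div, cayleyCoeff]

theorem stmt2 (α : ℝ) (hα : α ∈ Set.Ioo (0:ℝ) 1) (n : ℕ) (hn : 2 ≤ n) :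
    taylorCoeff α n = (1 / (2 * α)) *
      ∑ k ∈ Finset.Icc 1 n, (2:ℂ) ^ k * genBinom α k * (Nat.choose (n-1) (n-k)) :=
  stmt2_general α n hn
end

section
/- For α ∈ (0,1), the subsequences {g_{2m}(α)}_{m≥1} and {g_{2m-1}(α)}_{m≥1} are strictly decreasing in m. -/
open Set

/-- The coefficient sequence `g_n(α)` defined by the recurrence
`g_0 = 0`, `g_1 = 1`, `g_{n+2} = (2α g_{n+1} + n g_n)/(n+2)`. -/
noncomputable def g (α : ℝ) : ℕ → ℝ
  | 0 => 0
  | 1 => 1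
  | (n + 2) => (2 * α * g α (n + 1) + n * g α n) / (n + 2)

/-!
For `0 < α < 1` the terms `g_{n+1}` are positive and the ratio `g_{n+2} / g_{n+1}` stays in
`[α, 1/α)`; the recurrence propagates this by induction because `α² < 1`. Since the recurrence
can be rewritten as `(n + 3)(g_{n+3} - g_{n+1}) = 2(α g_{n+2} - g_{n+1})`, the upper bound
`α g_{n+2} < g_{n+1}` is exactly `g_{n+3} < g_{n+1}`.
-/

lemma add_two_mul_g_add_two (α : ℝ) (n : ℕ) :
    ((n : ℝ) + 2) * g α (n + 2) = 2 * α * g α (n + 1) + n * g α n := by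
  rw [g]
  field_simp

lemma add_three_mul_g_add_three (α : ℝ) (n : ℕ) :
    ((n : ℝ) + 3) * g α (n + 3) = 2 * α * g α (n + 2) + (n + 1) * g α (n + 1) := by
  have h := add_two_mul_g_add_two α (n + 1)
  push_cast at h
  linear_combination h

section

variable {α : ℝ}

lemma g_pos_and_ratio_bounds (h0 : 0 < α) (h1 : α < 1) (n : ℕ) :
    0 < g α (n + 1) ∧ α * g α (n + 2) < g α (n + 1) ∧ α * g α (n + 1) ≤ g α (n + 2) := by
  induction n with
  | zero =>
    norm_num [g]
    nlinarith
  | succ n ih =>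
    obtain ⟨hpos, hlt, hle⟩ := ih
    have hpos' : 0 < g α (n + 2) := (mul_pos h0 hpos).trans_le hle
    have hrec := add_three_mul_g_add_three α n
    have hn : (0 : ℝ) < n + 3 := by positivity
    refine ⟨hpos', ?_, ?_⟩
    · have hα2 : α * α < 1 := by nlinarith
      refine lt_of_mul_lt_mul_left (a := (n : ℝ) + 3) ?_ hn.le
      nlinarith [mul_le_mul_of_nonneg_left hle (by positivity : (0 : ℝ) ≤ n + 1),
        mul_lt_mul_of_pos_right hα2 hpos']
    · refine le_of_mul_le_mul_left (a := (n : ℝ) + 3) ?_ hn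
      nlinarith [mul_le_mul_of_nonneg_left hlt.le (by positivity : (0 : ℝ) ≤ n + 1)]

lemma g_add_three_lt (h0 : 0 < α) (h1 : α < 1) (n : ℕ) : g α (n + 3) < g α (n + 1) := by
  have hlt := (g_pos_and_ratio_bounds h0 h1 n).2.1
  have hrec := add_three_mul_g_add_three α n
  have hn : (0 : ℝ) < n + 3 := by positivity
  exact lt_of_mul_lt_mul_left (a := (n : ℝ) + 3) (by linarith) hn.le

lemma strictAnti_g_two_mul_add (h0 : 0 < α) (h1 : α < 1) (k : ℕ) :
    StrictAnti fun m : ℕ => g α (2 * m + k + 1) :=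
  strictAnti_nat_of_succ_lt fun m => by
    have h := g_add_three_lt h0 h1 (2 * m + k)
    rwa [show 2 * m + k + 3 = 2 * (m + 1) + k + 1 by ring] at h

end

theorem stmt5 (α : ℝ) (hα : α ∈ Set.Ioo (0:ℝ) 1) :
    StrictAnti (fun m : ℕ => g α (2 * (m + 1))) ∧
    StrictAnti (fun m : ℕ => g α (2 * (m + 1) - 1)) := by
  obtain ⟨h0, h1⟩ := hα
  constructor
  · convert strictAnti_g_two_mul_add h0 h1 1 using 3
    omega
  · convert strictAnti_g_two_mul_add h0 h1 0 using 3
    omega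
end

section
/- If α ∈ (1/2, 1), then for every n ≥ 2 the inequalities g_n(α) > g_{n+1}(α) > (n/(n + 2 - 2α)) g_n(α) hold. -/
/-!
The recurrence reads `(n + 2) g_{n+2} = 2α g_{n+1} + n g_n`, so `g_{n+2} < g_{n+1}` is
equivalent to the ratio bound `n g_n < (n + 2 - 2α) g_{n+1}`. Conversely, the ratio bound one
step further follows from `g_{n+1} < g_n`, because
`(n + 3 - 2α)(n + 2α) - (n + 1)(n + 2) = 2(2α - 1)(1 - α) > 0`.
Hence positivity, monotonicity and the ratio bound propagate together by induction, starting
from `g_1 = 1`, `g_2 = α`.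
-/

open Set

lemma g_two (α : ℝ) : g α 2 = α := by
  simp [g]

lemma g_add_two_lt_iff (α : ℝ) (n : ℕ) :
    g α (n + 2) < g α (n + 1) ↔ n * g α n < (n + 2 - 2 * α) * g α (n + 1) := by
  have hpos : (0 : ℝ) < n + 2 := by positivity
  rw [← mul_lt_mul_iff_right₀ hpos, add_two_mul_g_add_two]
  constructor <;> intro h <;> linarith

lemma add_one_mul_g_add_one_lt {α : ℝ} (hα : α ∈ Icc (1/2 : ℝ) 1) {n : ℕ} (hn : 1 ≤ n)
    (hnonneg : 0 ≤ g α (n + 1)) (hlt : g α (n + 1) < g α n) :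
    ((n : ℝ) + 1) * g α (n + 1) < (n + 3 - 2 * α) * g α (n + 2) := by
  obtain ⟨hα₁, hα₂⟩ := hα
  have hn' : (1 : ℝ) ≤ n := by exact_mod_cast hn
  have hfactor : ((n : ℝ) + 1) * (n + 2) ≤ (n + 3 - 2 * α) * (n + 2 * α) := by
    nlinarith [mul_nonneg (sub_nonneg.2 hα₁) (sub_nonneg.2 hα₂)]
  have hpos : (0 : ℝ) < n + 2 := by positivity
  rw [← mul_lt_mul_iff_right₀ hpos]
  calc ((n : ℝ) + 2) * ((n + 1) * g α (n + 1))
      ≤ (n + 3 - 2 * α) * ((n + 2 * α) * g α (n + 1)) := by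
        nlinarith [mul_le_mul_of_nonneg_right hfactor hnonneg]
    _ < (n + 3 - 2 * α) * (2 * α * g α (n + 1) + n * g α n) := by
      have : (n : ℝ) * g α (n + 1) < n * g α n := by gcongr
      gcongr
      · linarith
      · linarith
    _ = (n + 2) * ((n + 3 - 2 * α) * g α (n + 2)) := by
      rw [← add_two_mul_g_add_two]; ring

lemma g_pos_and_lt_and_ratio_lt {α : ℝ} (hα : α ∈ Ioo (1/2 : ℝ) 1) {n : ℕ} (hn : 1 ≤ n) :
    0 < g α n ∧ g α (n + 1) < g α n ∧ n * g α n < (n + 2 - 2 * α) * g α (n + 1) := by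
  obtain ⟨hα₁, hα₂⟩ := hα
  induction n, hn using Nat.le_induction with
  | base =>
    norm_num [g_two, g]
    refine ⟨hα₂, by nlinarith [mul_pos (sub_pos.2 hα₁) (sub_pos.2 hα₂)]⟩
  | succ n hn ih =>
    obtain ⟨hpos, hlt, hratio⟩ := ih
    have hn' : (1 : ℝ) ≤ n := by exact_mod_cast hn
    have hpos' : 0 < g α (n + 1) := by nlinarith
    refine ⟨hpos', (g_add_two_lt_iff α n).2 hratio, ?_⟩
    push_cast
    convert add_one_mul_g_add_one_lt ⟨hα₁.le, hα₂.le⟩ hn hpos'.le hlt using 2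
    ring

theorem stmt6 (α : ℝ) (hα : α ∈ Set.Ioo (1/2 : ℝ) 1) (n : ℕ) (hn : 2 ≤ n) :
    g α n > g α (n + 1) ∧ g α (n + 1) > (n / (n + 2 - 2 * α)) * g α n := by
  obtain ⟨-, hlt, hratio⟩ := g_pos_and_lt_and_ratio_lt hα (by omega : 1 ≤ n)
  have hc : (0 : ℝ) < n + 2 - 2 * α := by linarith [hα.2, (Nat.cast_nonneg n : (0 : ℝ) ≤ n)]
  refine ⟨hlt, ?_⟩
  rwa [gt_iff_lt, div_mul_eq_mul_div, div_lt_iff₀ hc, mul_comm (g α (n + 1))]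
end

section
/- For every α ∈ (0,1), the limit of n^{1-α} g_n(α) as n → ∞ equals 2^{α-1}/Γ(α+1), where Γ is the Euler Gamma function. -/
/-!
The series `f_α' = (1 + z) ^ (α - 1) * (1 - z) ^ (-α - 1)` has `n`-th coefficient
`(n + 1) g_{n+1}`: both are determined by the same three-term recurrence, which for the product
follows from the first-order differential equations of its two binomial factors. Writing
`(1 - z) ^ (-α - 1)` as `(1 - z) ^ (-α) / (1 - z)` turns this coefficient into a Nörlund mean,
with the weights `multichoose α j` of `(1 - z) ^ (-α)`, of the partial sums of the binomial series
of `(1 + z) ^ (α - 1)` at `z = 1`. These partial sums converge (alternating series) and, by Abel's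
theorem, to `2 ^ (α - 1)`; the weights make the mean regular because
`multichoose α n / multichoose (α + 1) n = α / (α + n) → 0`; and the normalising factor
`multichoose (α + 1) n` is asymptotic to `n ^ α / Γ(α + 1)` by Euler's limit formula for `Γ`.
-/

open Set Filter Real

open Finset Topology Ring
open scoped Nat

namespace Ring

theorem multichoose_mul_factorial (s : ℝ) (n : ℕ) :
    multichoose s n * n ! = ∏ m ∈ range n, (s + m) := by
  rw [mul_comm, ← nsmul_eq_mul, factorial_nsmul_multichoose_eq_ascPochhammer,
    Polynomial.ascPochhammer_smeval_eq_eval]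
  induction n with
  | zero => simp
  | succ n ih => rw [ascPochhammer_succ_eval, ih, prod_range_succ]

theorem succ_mul_multichoose_succ (s : ℝ) (n : ℕ) :
    (n + 1) * multichoose s (n + 1) = (s + n) * multichoose s n := by
  have h := multichoose_mul_factorial s (n + 1)
  rw [prod_range_succ, ← multichoose_mul_factorial, Nat.factorial_succ] at h
  have : (n ! : ℝ) ≠ 0 := by positivity
  apply mul_right_cancel₀ this
  push_cast at h
  linear_combination h

theorem multichoose_pos {s : ℝ} (hs : 0 < s) (n : ℕ) : 0 < multichoose s n := by
  have h := multichoose_mul_factorial s n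
  have : 0 < ∏ m ∈ range n, (s + m) := prod_pos fun m _ => by positivity
  rw [← h] at this
  exact pos_of_mul_pos_left this (by positivity)

theorem mul_multichoose_add_one (s : ℝ) (n : ℕ) :
    s * multichoose (s + 1) n = (s + n) * multichoose s n := by
  induction n with
  | zero => simp
  | succ n ih =>
    have h1 := succ_mul_multichoose_succ (s + 1) n
    have h2 := succ_mul_multichoose_succ s n
    have : ((n : ℝ) + 1) ≠ 0 := by positivity
    apply mul_left_cancel₀ this
    push_cast
    linear_combination s * h1 + (s + 1 + n) * ih - (s + n + 1) * h2

theorem choose_eq_neg_one_pow_mul_multichoose (a : ℝ) (n : ℕ) :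
    choose a n = (-1) ^ n * multichoose (-a) n := by
  rw [← neg_neg a, choose_neg', neg_neg]
  simp [Int.negOnePow, Units.smul_def]

theorem prod_range_succ_add_eq_mul_multichoose (s : ℝ) (n : ℕ) :
    ∏ j ∈ range (n + 1), (s + j) = s * multichoose (s + 1) n * n ! := by
  rw [prod_range_succ, ← multichoose_mul_factorial, mul_multichoose_add_one]
  ring

theorem sum_range_succ_multichoose (s : ℝ) (n : ℕ) :
    ∑ j ∈ range (n + 1), multichoose s j = multichoose (s + 1) n := by
  induction n with
  | zero => simp
  | succ n ih => rw [sum_range_succ, ih, Ring.multichoose_succ_succ, add_comm]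

theorem multichoose_antitone {s : ℝ} (hs₀ : 0 < s) (hs₁ : s ≤ 1) :
    Antitone (multichoose s) := by
  refine antitone_nat_of_succ_le fun n => ?_
  have h := succ_mul_multichoose_succ s n
  have := multichoose_pos hs₀ n
  nlinarith

theorem succ_mul_choose_succ (a : ℝ) (n : ℕ) :
    (n + 1) * choose a (n + 1) = (a - n) * choose a n := by
  rw [choose_eq_neg_one_pow_mul_multichoose, choose_eq_neg_one_pow_mul_multichoose, pow_succ]
  linear_combination (-(-1 : ℝ) ^ n) * succ_mul_multichoose_succ (-a) n

end Ring

theorem tendsto_multichoose_div_rpow {s : ℝ} (hs : ∀ m : ℕ, s ≠ -m) :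
    Tendsto (fun n : ℕ => multichoose (s + 1) n / (n : ℝ) ^ s) atTop
      (𝓝 (Gamma (s + 1))⁻¹) := by
  have hs₀ : s ≠ 0 := by simpa using hs 0
  have hprod (n : ℕ) : s * multichoose (s + 1) n * n ! ≠ 0 := by
    rw [← prod_range_succ_add_eq_mul_multichoose]
    exact prod_ne_zero_iff.2 fun j _ => by
      have := hs j
      contrapose! this
      linarith
  rw [Gamma_add_one hs₀]
  refine (((GammaSeq_tendsto_Gamma s).const_mul s).inv₀
    (mul_ne_zero hs₀ (Gamma_ne_zero hs))).congr' ?_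
  filter_upwards [eventually_ge_atTop 1] with n hn
  have : (n : ℝ) ^ s ≠ 0 := (rpow_pos_of_pos (by exact_mod_cast hn) s).ne'
  have := hprod n
  rw [GammaSeq, prod_range_succ_add_eq_mul_multichoose]
  field_simp

theorem tendsto_multichoose_zero {s : ℝ} (hs : s ∈ Ioo (0 : ℝ) 1) :
    Tendsto (multichoose s) atTop (𝓝 0) := by
  have hs' (m : ℕ) : s - 1 ≠ -m := by
    rcases m with _ | m
    · simpa using (sub_neg.2 hs.2).ne
    · exact ne_of_gt (by push_cast; linarith [hs.1, (m.cast_nonneg : (0 : ℝ) ≤ m)])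
  have hpow : Tendsto (fun n : ℕ => (n : ℝ) ^ (s - 1)) atTop (𝓝 0) := by
    have := (tendsto_rpow_neg_atTop (y := 1 - s) (by linarith [hs.2])).comp
      tendsto_natCast_atTop_atTop
    simpa [Function.comp_def] using this
  have := (tendsto_multichoose_div_rpow hs').mul hpow
  rw [mul_zero, sub_add_cancel] at this
  refine this.congr' ?_
  filter_upwards [eventually_ge_atTop 1] with n hn
  have : (n : ℝ) ^ (s - 1) ≠ 0 := (rpow_pos_of_pos (by exact_mod_cast hn) _).ne'
  field_simp

theorem tendsto_sum_range_choose {a : ℝ} (ha : a ∈ Ioo (-1 : ℝ) 0) :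
    Tendsto (fun n => ∑ i ∈ range n, choose a i) atTop (𝓝 (2 ^ a)) := by
  have hna : -a ∈ Ioo (0 : ℝ) 1 := ⟨by linarith [ha.2], by linarith [ha.1]⟩
  obtain ⟨l, hl⟩ :=
    (multichoose_antitone hna.1 hna.2.le).tendsto_alternating_series_of_tendsto_zero
      (tendsto_multichoose_zero hna)
  simp_rw [← choose_eq_neg_one_pow_mul_multichoose] at hl
  suffices l = 2 ^ a by rwa [← this]
  have hsum : ∀ x ∈ Ioo (0 : ℝ) 1, ∑' n, choose a n * x ^ n = (1 + x) ^ a := fun x hx => by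
    have := (one_add_rpow_hasFPowerSeriesOnBall_zero (a := a)).hasSum (y := x) ?_
    · simpa [binomialSeries, mul_comm] using this.tsum_eq
    · simpa [enorm_eq_nnnorm, ← NNReal.coe_lt_one, abs_of_pos hx.1] using hx.2
  have hcont : Tendsto (fun x : ℝ => (1 + x) ^ a) (𝓝[<] 1) (𝓝 (2 ^ a)) := by
    have : ContinuousAt (fun x : ℝ => (1 + x) ^ a) 1 :=
      (continuousAt_const.add continuousAt_id).rpow_const (Or.inl (by norm_num))
    simpa [one_add_one_eq_two] using this.tendsto.mono_left nhdsWithin_le_nhds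
  refine tendsto_nhds_unique ((tendsto_tsum_powerSeries_nhdsWithin_lt hl).congr' ?_) hcont
  filter_upwards [Ioo_mem_nhdsLT (show (0 : ℝ) < 1 by norm_num)] with x hx
  exact hsum x hx

theorem tendsto_multichoose_div_multichoose_add_one {s : ℝ} (hs : 0 < s) :
    Tendsto (fun n => multichoose s n / multichoose (s + 1) n) atTop (𝓝 0) := by
  have hlim : Tendsto (fun n : ℕ => s / (s + n)) atTop (𝓝 0) :=
    tendsto_const_nhds.div_atTop (tendsto_atTop_add_const_left _ s tendsto_natCast_atTop_atTop)
  refine hlim.congr fun n => ?_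
  have := multichoose_pos (by linarith : 0 < s + 1) n
  have : (0 : ℝ) < s + n := by positivity
  rw [div_eq_div_iff (by positivity) (by positivity), mul_multichoose_add_one]
  ring

namespace PowerSeries

theorem coeff_X_mul_derivative {R : Type*} [CommSemiring R] (F : R⟦X⟧) (n : ℕ) :
    coeff n (X * d⁄dX R F) = n * coeff n F := by
  cases n with
  | zero => simp
  | succ n => rw [coeff_succ_X_mul, coeff_derivative, mul_comm]; push_cast; rfl

theorem coeff_mul_mk_one {R : Type*} [CommSemiring R] (F : R⟦X⟧) (n : ℕ) :
    coeff n (F * mk 1) = ∑ i ∈ range (n + 1), coeff i F := by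
  simp [coeff_mul, Finset.Nat.sum_antidiagonal_eq_sum_range_succ_mk]

theorem mk_multichoose_add_one (s : ℝ) :
    mk (multichoose (s + 1)) = mk (multichoose s) * mk 1 := by
  ext n
  simp [coeff_mul_mk_one, sum_range_succ_multichoose]

theorem coeff_mk_choose_mul_mk_multichoose_add_one (a s : ℝ) (n : ℕ) :
    coeff n (mk (choose a) * mk (multichoose (s + 1))) =
      ∑ p ∈ antidiagonal n, multichoose s p.2 * ∑ m ∈ range (p.1 + 1), choose a m := by
  rw [mk_multichoose_add_one, mul_comm (mk (multichoose s)), ← mul_assoc, coeff_mul]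
  refine sum_congr rfl fun p _ => ?_
  rw [coeff_mul_mk_one, mul_comm]
  simp only [coeff_mk]

theorem one_add_X_mul_derivative_mk_choose (a : ℝ) :
    (1 + X) * d⁄dX ℝ (mk (choose a)) = C a * mk (choose a) := by
  ext n
  rw [add_mul, one_mul, map_add, coeff_X_mul_derivative, coeff_derivative, coeff_C_mul,
    coeff_mk, coeff_mk, mul_comm, succ_mul_choose_succ]
  ring

theorem one_sub_X_mul_derivative_mk_multichoose (s : ℝ) :
    (1 - X) * d⁄dX ℝ (mk (multichoose s)) = C s * mk (multichoose s) := by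
  ext n
  rw [sub_mul, one_mul, map_sub, coeff_X_mul_derivative, coeff_derivative, coeff_C_mul,
    coeff_mk, coeff_mk, mul_comm, succ_mul_multichoose_succ]
  ring

theorem one_sub_X_sq_mul_derivative_mk_choose_mul_mk_multichoose (a s : ℝ) :
    (1 - X ^ 2) * d⁄dX ℝ (mk (choose a) * mk (multichoose s)) =
      (C (a + s) + C (s - a) * X) * (mk (choose a) * mk (multichoose s)) := by
  rw [Derivation.leibniz, smul_eq_mul, smul_eq_mul, map_add, map_sub]
  linear_combination (1 - X) * mk (multichoose s) * one_add_X_mul_derivative_mk_choose a +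
    (1 + X) * mk (choose a) * one_sub_X_mul_derivative_mk_multichoose s

end PowerSeries

open PowerSeries in
theorem coeff_mk_choose_mul_mk_multichoose_eq_g (α : ℝ) (n : ℕ) :
    coeff n (mk (choose (α - 1)) * mk (multichoose (α + 1))) = (n + 1) * g α (n + 1) := by
  set H := mk (choose (α - 1)) * mk (multichoose (α + 1))
  have hode : d⁄dX ℝ H - X * (X * d⁄dX ℝ H) = C (2 * α) * H + C 2 * (X * H) := by
    have := one_sub_X_sq_mul_derivative_mk_choose_mul_mk_multichoose (α - 1) (α + 1)
    rw [show α - 1 + (α + 1) = 2 * α by ring, show α + 1 - (α - 1) = 2 by ring] at this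
    linear_combination this
  have hcoeff (k : ℕ) := congrArg (coeff k) hode
  simp only [map_sub, map_add, coeff_C_mul] at hcoeff
  have h₀ : coeff 0 H = 1 := by simp [H, coeff_mul]
  have h₁ : coeff 1 H = 2 * α := by
    have := hcoeff 0
    simp only [coeff_derivative, coeff_zero_X_mul, h₀] at this
    linear_combination this
  have hrec (k : ℕ) :
      (k + 2) * coeff (k + 2) H = 2 * α * coeff (k + 1) H + (k + 2) * coeff k H := by
    have := hcoeff (k + 1)
    rw [coeff_succ_X_mul, coeff_succ_X_mul, coeff_X_mul_derivative, coeff_derivative] at this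
    push_cast at this
    linear_combination this
  induction n using Nat.twoStepInduction with
  | zero => simp [h₀, g]
  | one => norm_num [h₁, g]
  | more n ih₀ ih₁ =>
    have hg : g α (n + 2 + 1) = (2 * α * g α (n + 2) + (n + 1) * g α (n + 1)) / (n + 3) := by
      simp only [g]; push_cast; ring_nf
    have : (n + 2 : ℝ) ≠ 0 := by positivity
    apply mul_left_cancel₀ this
    rw [hrec, ih₀, ih₁, hg]
    push_cast
    field_simp
    ring

theorem sum_range_succ_reflect {M : Type*} [AddCommMonoid M] (f : ℕ → M) (n : ℕ) :
    ∑ i ∈ range (n + 1), f (n - i) = ∑ j ∈ range (n + 1), f j := by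
  simpa using sum_range_reflect f (n + 1)

noncomputable def norlundMean (v x : ℕ → ℝ) (n : ℕ) : ℝ :=
  (∑ p ∈ antidiagonal n, v p.2 * x p.1) / ∑ j ∈ range (n + 1), v j

section NorlundMean

variable {v x : ℕ → ℝ}

theorem abs_sum_antidiagonal_mul_le {ε M : ℝ} {K : ℕ} (hv : ∀ n, 0 ≤ v n)
    (hM : ∀ i, |x i| ≤ M) (hK : ∀ i ≥ K, |x i| ≤ ε) (n : ℕ) :
    |∑ p ∈ antidiagonal n, v p.2 * x p.1| ≤
      ε * ∑ j ∈ range (n + 1), v j + M * ∑ i ∈ range K, v (n - i) := by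
  have hε : 0 ≤ ε := (abs_nonneg _).trans (hK K le_rfl)
  have hterm (i : ℕ) : |x i| ≤ ε + if i < K then M else 0 := by
    split_ifs with hi
    · linarith [hM i]
    · linarith [hK i (not_lt.1 hi)]
  rw [Nat.sum_antidiagonal_eq_sum_range_succ (fun i j => v j * x i)]
  calc |∑ i ∈ range (n + 1), v (n - i) * x i|
      ≤ ∑ i ∈ range (n + 1), v (n - i) * (ε + if i < K then M else 0) := by
        refine (abs_sum_le_sum_abs _ _).trans (sum_le_sum fun i _ => ?_)
        rw [abs_mul, abs_of_nonneg (hv _)]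
        exact mul_le_mul_of_nonneg_left (hterm i) (hv _)
    _ = ε * ∑ i ∈ range (n + 1), v (n - i) +
          M * ∑ i ∈ (range (n + 1)).filter (· < K), v (n - i) := by
        simp only [mul_add, sum_add_distrib, mul_sum, sum_filter, mul_ite, mul_zero]
        congr 1 <;> refine sum_congr rfl fun i _ => ?_ <;> grind
    _ ≤ ε * ∑ j ∈ range (n + 1), v j + M * ∑ i ∈ range K, v (n - i) := by
        rw [sum_range_succ_reflect]
        gcongr
        · exact (abs_nonneg _).trans (hM 0)
        · exact fun _ _ _ => hv _
        · exact fun i hi => by simp_all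

theorem tendsto_norlundMean_zero (hx : Tendsto x atTop (𝓝 0)) (hv : ∀ n, 0 ≤ v n)
    (hv₀ : 0 < v 0) (hvV : Tendsto (fun n => v n / ∑ j ∈ range (n + 1), v j) atTop (𝓝 0)) :
    Tendsto (norlundMean v x) atTop (𝓝 0) := by
  set V := fun n => ∑ j ∈ range (n + 1), v j
  have hVpos (n : ℕ) : 0 < V n :=
    hv₀.trans_le (single_le_sum (fun j _ => hv j) (mem_range.2 n.succ_pos))
  have hVmono : Monotone V := fun m n h =>
    sum_le_sum_of_subset_of_nonneg (range_subset_range.2 (by omega)) fun j _ _ => hv j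
  have hlag (i : ℕ) : Tendsto (fun n => v (n - i) / V n) atTop (𝓝 0) := by
    rw [← tendsto_add_atTop_iff_nat i]
    simp only [Nat.add_sub_cancel]
    exact squeeze_zero (fun n => div_nonneg (hv _) (hVpos _).le)
      (fun n => div_le_div_of_nonneg_left (hv n) (hVpos n) (hVmono (Nat.le_add_right n i))) hvV
  obtain ⟨M, hM⟩ : ∃ M, ∀ i, |x i| ≤ M := by
    obtain ⟨M, hM⟩ := hx.abs.bddAbove_range
    exact ⟨M, fun i => hM ⟨i, rfl⟩⟩
  rw [Metric.tendsto_nhds]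
  intro ε hε
  obtain ⟨K, hK⟩ := Metric.tendsto_atTop.1 hx (ε / 2) (half_pos hε)
  have hhead : Tendsto (fun n => M * ∑ i ∈ range K, v (n - i) / V n) atTop (𝓝 0) := by
    simpa using (tendsto_finsetSum _ fun i _ => hlag i).const_mul M
  filter_upwards [(tendsto_order.1 hhead).2 (ε / 2) (half_pos hε)] with n hn
  rw [← sum_div, ← mul_div_assoc, div_lt_iff₀ (hVpos n)] at hn
  rw [Real.dist_eq, sub_zero, norlundMean, abs_div, abs_of_pos (hVpos n), div_lt_iff₀ (hVpos n)]
  calc _ ≤ ε / 2 * V n + M * ∑ i ∈ range K, v (n - i) :=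
        abs_sum_antidiagonal_mul_le hv hM (fun i hi => by simpa using (hK i hi).le) n
    _ < ε * V n := by linarith

theorem tendsto_norlundMean {S : ℝ} (hx : Tendsto x atTop (𝓝 S)) (hv : ∀ n, 0 ≤ v n)
    (hv₀ : 0 < v 0) (hvV : Tendsto (fun n => v n / ∑ j ∈ range (n + 1), v j) atTop (𝓝 0)) :
    Tendsto (norlundMean v x) atTop (𝓝 S) := by
  have hVpos (n : ℕ) : 0 < ∑ j ∈ range (n + 1), v j :=
    hv₀.trans_le (single_le_sum (fun j _ => hv j) (mem_range.2 n.succ_pos))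
  refine tendsto_sub_nhds_zero_iff.1 ((tendsto_norlundMean_zero (x := fun i => x i - S)
    (tendsto_sub_nhds_zero_iff.2 hx) hv hv₀ hvV).congr fun n => ?_)
  have hsum : ∑ p ∈ antidiagonal n, v p.2 = ∑ j ∈ range (n + 1), v j := by
    rw [Nat.sum_antidiagonal_eq_sum_range_succ (fun _ j => v j), sum_range_succ_reflect]
  simp only [norlundMean, mul_sub, sum_sub_distrib, ← sum_mul, hsum]
  field_simp [(hVpos n).ne']

end NorlundMean

theorem succ_mul_g_succ {α : ℝ} (hα : -1 < α) (n : ℕ) :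
    (n + 1) * g α (n + 1) =
      norlundMean (multichoose α) (fun i => ∑ m ∈ range (i + 1), choose (α - 1) m) n *
        multichoose (α + 1) n := by
  rw [← coeff_mk_choose_mul_mk_multichoose_eq_g,
    PowerSeries.coeff_mk_choose_mul_mk_multichoose_add_one,
    norlundMean, sum_range_succ_multichoose,
    div_mul_cancel₀ _ (multichoose_pos (by linarith) n).ne']

theorem stmt9 (α : ℝ) (hα : α ∈ Set.Ioo (0:ℝ) 1) :
    Tendsto (fun n : ℕ => (n : ℝ) ^ (1 - α) * g α n) atTop
      (nhds ((2 : ℝ) ^ (α - 1) / Real.Gamma (α + 1))) := by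
  obtain ⟨hα₀, hα₁⟩ := hα
  have hpartial := (tendsto_add_atTop_iff_nat 1).2
    (tendsto_sum_range_choose (a := α - 1) ⟨by linarith, by linarith⟩)
  have hmean := tendsto_norlundMean hpartial (fun n => (multichoose_pos hα₀ n).le) (by simp)
    (by simpa only [sum_range_succ_multichoose] using
      tendsto_multichoose_div_multichoose_add_one hα₀)
  have hgrowth := tendsto_multichoose_div_rpow (s := α) fun m =>
    ((neg_nonpos.2 m.cast_nonneg).trans_lt hα₀).ne'
  have hratio : Tendsto (fun n : ℕ => ((n : ℝ) / (n + 1)) ^ α) atTop (𝓝 1) := by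
    simpa [Function.comp_def] using
      ((continuous_rpow_const hα₀.le).tendsto 1).comp (tendsto_natCast_div_add_atTop (1 : ℝ))
  rw [← tendsto_add_atTop_iff_nat 1, div_eq_mul_inv, ← mul_one (_ * _)]
  refine ((hmean.mul hgrowth).mul hratio).congr' ?_
  filter_upwards [eventually_ge_atTop 1] with n hn
  have hn₀ : (0 : ℝ) < n := by exact_mod_cast hn
  have : (n : ℝ) ^ α ≠ 0 := (rpow_pos_of_pos hn₀ α).ne'
  push_cast
  rw [div_rpow hn₀.le (by positivity), rpow_sub (by positivity), rpow_one]
  field_simp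
  linear_combination -succ_mul_g_succ (by linarith : -1 < α) n
end

section
/- For all α, β ∈ (0,1] with α + β < 1, the Hadamard product f_α * f_β (the holomorphic function on the unit disk whose n-th Taylor coefficient is g_n(α)·g_n(β)) is bounded on the unit disk. -/
/-!
The coefficients satisfy `0 ≤ g_n(α) ≤ n^(α-1)`. The upper bound propagates through the
recurrence because `2α (n+1)^(α-1) + n^α ≤ (n+2)^α`, which follows from the mean value theorem
applied to `t ↦ (a+t)^α - (a-t)^α` and the convexity of `x ↦ x^(α-1)`. Hence the coefficients of
the Hadamard product are bounded by `n^(α+β-2)`, which is summable when `α + β < 1`.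
-/

open Set Filter

/-- The Hadamard product f_α * f_β, with Taylor coefficients g_n(α)·g_n(β). -/
noncomputable def hadamard (α β : ℝ) (z : ℂ) : ℂ :=
  ∑' n : ℕ, ((g α n * g β n : ℝ) : ℂ) * z ^ n

lemma two_mul_rpow_le_rpow_add_rpow {p u v a : ℝ} (hp : p ≤ 0) (hu : 0 < u) (hv : 0 < v)
    (huv : u + v = 2 * a) : 2 * a ^ p ≤ u ^ p + v ^ p := by
  have ha : 0 < a := by linarith
  have hsq (x : ℝ) (hx : 0 < x) : (x ^ (p / 2)) * (x ^ (p / 2)) = x ^ p := by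
    rw [← Real.rpow_add hx, add_halves]
  -- `√(uv) ≤ a` and `p/2 ≤ 0` give `a^p ≤ (uv)^(p/2)`; conclude by AM-GM.
  have hgeom : a ^ p ≤ u ^ (p / 2) * v ^ (p / 2) := by
    rw [← Real.mul_rpow hu.le hv.le, ← hsq a ha, ← Real.mul_rpow ha.le ha.le]
    exact Real.rpow_le_rpow_of_nonpos (mul_pos hu hv) (by nlinarith [sq_nonneg (u - v)])
      (by linarith)
  nlinarith [sq_nonneg (u ^ (p / 2) - v ^ (p / 2)), hsq u hu, hsq v hv]

lemma two_mul_mul_rpow_sub_one_le_rpow_add_one_sub {α a : ℝ} (hα0 : 0 < α) (hα1 : α ≤ 1)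
    (ha : 1 ≤ a) : 2 * α * a ^ (α - 1) ≤ (a + 1) ^ α - (a - 1) ^ α := by
  set f : ℝ → ℝ := fun t => (a + t) ^ α - (a - t) ^ α
  have hderiv (t : ℝ) (ht : t ∈ Ioo (0 : ℝ) 1) :
      HasDerivAt f (α * (a + t) ^ (α - 1) + α * (a - t) ^ (α - 1)) t := by
    have hplus := ((hasDerivAt_id' t).const_add a).rpow_const (p := α)
      (Or.inl (by linarith [ht.1]))
    have hminus := ((hasDerivAt_id' t).const_sub a).rpow_const (p := α)
      (Or.inl (by linarith [ht.2]))
    exact (hplus.sub hminus).congr_deriv (by ring)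
  have hcont : ContinuousOn f (Icc 0 1) := by
    apply Continuous.continuousOn
    fun_prop (disch := exact hα0.le)
  have hdiff : DifferentiableOn ℝ f (interior (Icc 0 1)) := by
    rw [interior_Icc]
    exact fun t ht => (hderiv t ht).differentiableAt.differentiableWithinAt
  have hslope : ∀ t ∈ interior (Icc (0 : ℝ) 1), 2 * α * a ^ (α - 1) ≤ deriv f t := by
    rw [interior_Icc]
    intro t ht
    rw [(hderiv t ht).deriv]
    have := two_mul_rpow_le_rpow_add_rpow (p := α - 1) (by linarith) (by linarith [ht.1])
      (by linarith [ht.2]) (by ring : (a + t) + (a - t) = 2 * a)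
    nlinarith
  have hmvt := (convex_Icc (0 : ℝ) 1).mul_sub_le_image_sub_of_le_deriv hcont hdiff hslope
    0 (by simp) 1 (by simp) zero_le_one
  simpa [f, Real.zero_rpow hα0.ne'] using hmvt

lemma g_nonneg {α : ℝ} (hα : 0 ≤ α) : ∀ n, 0 ≤ g α n
  | 0 => le_rfl
  | 1 => zero_le_one
  | n + 2 => by
    have := g_nonneg hα n
    have := g_nonneg hα (n + 1)
    rw [g]
    positivity

lemma g_le_rpow {α : ℝ} (hα0 : 0 < α) (hα1 : α ≤ 1) : ∀ n : ℕ, g α n ≤ (n : ℝ) ^ (α - 1)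
  | 0 => by simpa [g] using Real.rpow_nonneg le_rfl (α - 1)
  | 1 => by simp [g]
  | n + 2 => by
    have hn1 := g_le_rpow hα0 hα1 (n + 1)
    have hn := g_le_rpow hα0 hα1 n
    have hstep := two_mul_mul_rpow_sub_one_le_rpow_add_one_sub hα0 hα1
      (a := (n : ℝ) + 1) (by simp)
    have hpow : (n : ℝ) ^ α = n * (n : ℝ) ^ (α - 1) := by
      conv_lhs => rw [← add_sub_cancel (1 : ℝ) α]
      rw [Real.rpow_add' (Nat.cast_nonneg n) (by simpa using hα0.ne'), Real.rpow_one]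
    push_cast at hn1 ⊢
    rw [g, Real.rpow_sub_one (by positivity), div_le_div_iff_of_pos_right (by positivity)]
    rw [show (n : ℝ) + 1 + 1 = n + 2 by ring, show (n : ℝ) + 1 - 1 = n by ring] at hstep
    nlinarith [mul_le_mul_of_nonneg_left hn (Nat.cast_nonneg n)]

lemma norm_tsum_mul_pow_le {R : Type*} [NormedRing R] [NormOneClass R] {c : ℕ → R}
    {b : ℕ → ℝ} {B : ℝ} (hb : HasSum b B) (hc : ∀ n, ‖c n‖ ≤ b n) {z : R} (hz : ‖z‖ ≤ 1) :
    ‖∑' n, c n * z ^ n‖ ≤ B :=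
  tsum_of_norm_bounded hb fun n => calc
    ‖c n * z ^ n‖ ≤ ‖c n‖ * ‖z‖ ^ n :=
      (norm_mul_le _ _).trans (mul_le_mul_of_nonneg_left (norm_pow_le z n) (norm_nonneg _))
    _ ≤ b n * 1 := mul_le_mul (hc n) (pow_le_one₀ (norm_nonneg z) hz) (by positivity)
      ((norm_nonneg _).trans (hc n))
    _ = b n := mul_one _

theorem stmt10 (α β : ℝ) (hα : α ∈ Set.Ioc (0:ℝ) 1) (hβ : β ∈ Set.Ioc (0:ℝ) 1)
    (hαβ : α + β < 1) :
    ∃ M : ℝ, ∀ z ∈ Metric.ball (0:ℂ) 1, ‖hadamard α β z‖ ≤ M := by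
  obtain ⟨hα0, hα1⟩ := hα
  obtain ⟨hβ0, hβ1⟩ := hβ
  have hcoeff (n : ℕ) : ‖((g α n * g β n : ℝ) : ℂ)‖ ≤ (n : ℝ) ^ (α + β - 2) := by
    rw [Complex.norm_real, Real.norm_eq_abs,
      abs_of_nonneg (mul_nonneg (g_nonneg hα0.le n) (g_nonneg hβ0.le n)),
      show α + β - 2 = (α - 1) + (β - 1) by ring,
      Real.rpow_add' (Nat.cast_nonneg n) (by linarith)]
    exact mul_le_mul (g_le_rpow hα0 hα1 n) (g_le_rpow hβ0 hβ1 n) (g_nonneg hβ0.le n)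
      (by positivity)
  have hsum : Summable fun n : ℕ => (n : ℝ) ^ (α + β - 2) :=
    Real.summable_nat_rpow.2 (by linarith)
  exact ⟨_, fun z hz => norm_tsum_mul_pow_le hsum.hasSum hcoeff (mem_ball_zero_iff.1 hz).le⟩
end

section
/- Let {α_n}_{n≥1} ⊂ (0,1] with B := Σ_{n≥1} (1 − α_n) > 1. Then the function f whose k-th Taylor coefficient is the infinite product Π_{n≥1} g_k(α_n) is bounded on the unit disk. -/
/-!
For `0 < a ≤ 1` the coefficients satisfy `0 ≤ g a k ≤ 1` and, by comparing the recurrence with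
that of the Taylor coefficients `(a)_k / k!` of `(1 - z)^{-a}`, also `a * g a k ≤ (a)_k / k!`,
which is at most `(k + 1)^{a - 1}` by Bernoulli's inequality. An infinite product of numbers in
`[0, 1]` is bounded by any finite subproduct, so choosing finitely many `n` with
`∑ (1 - α n) = B' > 1` bounds the `k`-th coefficient of `f` by `(∏ (α n)⁻¹) (k + 1)^{-B'}`.
These bounds are summable, so the Taylor series of `f` converges absolutely on the closed disk.
-/

open Set Filter

open Finset Real

lemma g_add_two (a : ℝ) (n : ℕ) :
    g a (n + 2) = (2 * a * g a (n + 1) + n * g a n) / (n + 2) := by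
  rw [g]

lemma g_nonneg_s17 {a : ℝ} (ha : 0 ≤ a) (k : ℕ) : 0 ≤ g a k := by
  induction k using Nat.twoStepInduction with
  | zero => simp [g]
  | one => simp [g]
  | more n ih₀ ih₁ => rw [g_add_two]; positivity

lemma g_le_one {a : ℝ} (ha₀ : 0 ≤ a) (ha₁ : a ≤ 1) (k : ℕ) : g a k ≤ 1 := by
  induction k using Nat.twoStepInduction with
  | zero => simp [g]
  | one => simp [g]
  | more n ih₀ ih₁ =>
    rw [g_add_two, div_le_one (by positivity)]
    nlinarith [g_nonneg_s17 ha₀ n, g_nonneg_s17 ha₀ (n + 1), (Nat.cast_nonneg n : (0:ℝ) ≤ n)]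

/-- `(a)_k / k!`, the `k`-th Taylor coefficient of `(1 - z)^{-a}`. -/
noncomputable def pochhammerRatio (a : ℝ) (k : ℕ) : ℝ := ∏ j ∈ range k, (j + a) / (j + 1)

lemma pochhammerRatio_succ (a : ℝ) (k : ℕ) :
    pochhammerRatio a (k + 1) = pochhammerRatio a k * ((k + a) / (k + 1)) :=
  prod_range_succ _ k

lemma pochhammerRatio_nonneg {a : ℝ} (ha : 0 ≤ a) (k : ℕ) : 0 ≤ pochhammerRatio a k :=
  prod_nonneg fun _ _ ↦ by positivity

lemma mul_g_le_pochhammerRatio {a : ℝ} (ha₀ : 0 ≤ a) (ha₁ : a ≤ 1) (k : ℕ) :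
    a * g a k ≤ pochhammerRatio a k := by
  induction k using Nat.twoStepInduction with
  | zero => simp [g, pochhammerRatio]
  | one => simp [g, pochhammerRatio]
  | more n ih₀ ih₁ =>
    set c := pochhammerRatio a n
    have hc : 0 ≤ c := pochhammerRatio_nonneg ha₀ n
    have hn0 : (0 : ℝ) ≤ n := n.cast_nonneg
    have hc1 : pochhammerRatio a (n + 1) = c * ((n + a) / (n + 1)) := pochhammerRatio_succ a n
    have hc2 : pochhammerRatio a (n + 2) = c * ((n + a) / (n + 1)) * ((n + 1 + a) / (n + 2)) := by
      rw [pochhammerRatio_succ, hc1]; push_cast; ring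
    -- `n * c_n ≤ (n + 1 - a) * c_{n+1}` is `n (n + 1) ≤ (n + 1 - a)(n + a)`, i.e. `0 ≤ a (1 - a)`
    have key : n * c ≤ (n + 1 - a) * pochhammerRatio a (n + 1) := by
      rw [hc1, mul_div_assoc', mul_comm, mul_div_assoc', le_div_iff₀ (by positivity)]
      nlinarith [mul_nonneg hc (mul_nonneg ha₀ (sub_nonneg.2 ha₁))]
    rw [g_add_two, hc2, ← hc1, mul_div_assoc', mul_div_assoc',
      div_le_div_iff_of_pos_right (by positivity)]
    nlinarith [mul_le_mul_of_nonneg_left ih₁ ha₀, mul_le_mul_of_nonneg_left ih₀ hn0]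

lemma one_add_mul_self_le_rpow_one_add_of_nonpos {s : ℝ} (hs : -1 < s) {p : ℝ} (hp : p ≤ 0) :
    1 + p * s ≤ (1 + s) ^ p := by
  have hs' : 0 < 1 + s := by linarith
  calc 1 + p * s = 1 + p * ((1 + s) - 1) := by ring
    _ ≤ 1 + p * log (1 + s) := by
        linarith [mul_le_mul_of_nonpos_left (log_le_sub_one_of_pos hs') hp]
    _ ≤ exp (log (1 + s) * p) := by linarith [add_one_le_exp (log (1 + s) * p)]
    _ = (1 + s) ^ p := (rpow_def_of_pos hs' p).symm

lemma pochhammerRatio_le_rpow {a : ℝ} (ha₀ : 0 ≤ a) (ha₁ : a ≤ 1) (k : ℕ) :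
    pochhammerRatio a k ≤ ((k : ℝ) + 1) ^ (a - 1) := by
  induction k with
  | zero => simp [pochhammerRatio]
  | succ n ih =>
    have hn : (0 : ℝ) < n + 1 := by positivity
    have hstep : (n + a) / (n + 1) ≤ ((n + 2) / (n + 1) : ℝ) ^ (a - 1) := by
      have hs : -1 < 1 / ((n : ℝ) + 1) := by linarith [one_div_pos.2 hn]
      convert one_add_mul_self_le_rpow_one_add_of_nonpos hs (sub_nonpos.2 ha₁) using 1
      · field_simp; ring
      · congr 1; field_simp; ring
    rw [pochhammerRatio_succ, Nat.cast_succ, add_assoc, one_add_one_eq_two]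
    calc pochhammerRatio a n * ((n + a) / (n + 1))
        ≤ ((n : ℝ) + 1) ^ (a - 1) * ((n + 2) / (n + 1) : ℝ) ^ (a - 1) :=
          mul_le_mul ih hstep (by positivity) (by positivity)
      _ = ((n : ℝ) + 2) ^ (a - 1) := by
          rw [← mul_rpow hn.le (by positivity), mul_div_cancel₀ _ hn.ne']

lemma g_le_inv_mul_rpow {a : ℝ} (ha₀ : 0 < a) (ha₁ : a ≤ 1) (k : ℕ) :
    g a k ≤ a⁻¹ * ((k : ℝ) + 1) ^ (a - 1) := by
  rw [le_inv_mul_iff₀ ha₀]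
  exact (mul_g_le_pochhammerRatio ha₀.le ha₁ k).trans (pochhammerRatio_le_rpow ha₀.le ha₁ k)

lemma tprod_le_prod_of_nonneg_of_le_one {ι : Type*} {f : ι → ℝ} (h₀ : ∀ i, 0 ≤ f i)
    (h₁ : ∀ i, f i ≤ 1) (s : Finset ι) : ∏' i, f i ≤ ∏ i ∈ s, f i := by
  have hbdd : BddBelow (range fun t : Finset ι ↦ ∏ i ∈ t, f i) :=
    ⟨0, by rintro _ ⟨t, rfl⟩; exact prod_nonneg fun i _ ↦ h₀ i⟩
  -- the finite products decrease, so `f` is multipliable and `∏'` is not the junk value `1`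
  have hprod : HasProd f (⨅ t : Finset ι, ∏ i ∈ t, f i) :=
    tendsto_atTop_ciInf (prod_anti_set_of_le_one h₀ h₁) hbdd
  rw [hprod.tprod_eq]
  exact ciInf_le hbdd s

lemma tprod_g_le {ι : Type*} {α : ι → ℝ} (hα : ∀ n, α n ∈ Set.Ioc 0 1) (s : Finset ι) (k : ℕ) :
    ∏' n, g (α n) k ≤ (∏ n ∈ s, (α n)⁻¹) * ((k : ℝ) + 1) ^ (-∑ n ∈ s, (1 - α n)) := by
  have hk : (0 : ℝ) < k + 1 := by positivity
  calc ∏' n, g (α n) k ≤ ∏ n ∈ s, g (α n) k :=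
        tprod_le_prod_of_nonneg_of_le_one (fun n ↦ g_nonneg_s17 (hα n).1.le k)
          (fun n ↦ g_le_one (hα n).1.le (hα n).2 k) s
    _ ≤ ∏ n ∈ s, (α n)⁻¹ * ((k : ℝ) + 1) ^ (α n - 1) :=
        prod_le_prod (fun n _ ↦ g_nonneg_s17 (hα n).1.le k)
          (fun n _ ↦ g_le_inv_mul_rpow (hα n).1 (hα n).2 k)
    _ = (∏ n ∈ s, (α n)⁻¹) * ((k : ℝ) + 1) ^ (-∑ n ∈ s, (1 - α n)) := by
        rw [prod_mul_distrib, ← rpow_sum_of_pos hk, ← sum_neg_distrib]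
        simp only [neg_sub]

lemma norm_tsum_mul_pow_le_s17 {R : Type*} [NormedRing R] [NormOneClass R] {a : ℕ → R}
    (ha : Summable fun k ↦ ‖a k‖) {z : R} (hz : ‖z‖ ≤ 1) :
    ‖∑' k, a k * z ^ k‖ ≤ ∑' k, ‖a k‖ :=
  tsum_of_norm_bounded ha.hasSum fun k ↦ (norm_mul_le _ _).trans <|
    mul_le_of_le_one_right (norm_nonneg _) ((norm_pow_le z k).trans (pow_le_one₀ (norm_nonneg z) hz))

lemma exists_finset_lt_sum_of_ofReal_lt_tsum {ι : Type*} {f : ι → ℝ} (hf : ∀ i, 0 ≤ f i) {c : ℝ}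
    (h : ENNReal.ofReal c < ∑' i, ENNReal.ofReal (f i)) : ∃ s : Finset ι, c < ∑ i ∈ s, f i := by
  rw [ENNReal.tsum_eq_iSup_sum, lt_iSup_iff] at h
  obtain ⟨s, hs⟩ := h
  rw [← ENNReal.ofReal_sum_of_nonneg fun i _ ↦ hf i] at hs
  exact ⟨s, (ENNReal.ofReal_lt_ofReal_iff'.1 hs).1⟩

theorem stmt17 (α : ℕ → ℝ) (hα : ∀ n, α n ∈ Set.Ioc (0:ℝ) 1)
    (hB : 1 < ∑' n : ℕ, ENNReal.ofReal (1 - α n)) :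
    ∃ M : ℝ, ∀ z ∈ Metric.ball (0:ℂ) 1,
      ‖∑' k : ℕ, ((∏' n : ℕ, g (α n) k : ℝ) : ℂ) * z ^ k‖ ≤ M := by
  obtain ⟨F, hF⟩ := exists_finset_lt_sum_of_ofReal_lt_tsum (fun n ↦ sub_nonneg.2 (hα n).2)
    (ENNReal.ofReal_one ▸ hB)
  have hnonneg : ∀ k, 0 ≤ ∏' n, g (α n) k := fun k ↦ tprod_nonneg fun n ↦ g_nonneg_s17 (hα n).1.le k
  have hsummable : Summable fun k : ℕ ↦ ∏' n, g (α n) k := by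
    refine Summable.of_nonneg_of_le hnonneg (tprod_g_le hα F) (Summable.mul_left _ ?_)
    exact_mod_cast (summable_nat_add_iff 1).2 (summable_nat_rpow.2 (neg_lt_neg hF))
  refine ⟨∑' k, ∏' n, g (α n) k, fun z hz ↦ ?_⟩
  convert norm_tsum_mul_pow_le_s17 (R := ℂ) ?_ (mem_ball_zero_iff.1 hz).le using 2 <;>
    simp only [Complex.norm_real, Real.norm_of_nonneg (hnonneg _), hsummable]
end

section
/- The volume of the region {(α_1, …, α_n) ∈ [0,1]^n : α_1 + α_2 ≥ 1, α_1 + α_2 + α_3 ≥ 2, …, α_1 + ⋯ + α_n ≥ n−1} is 1/n!. -/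
/-!
The substitution `y = 1 - x` preserves Lebesgue measure and the cube, and turns the constraints
into `∑_{i<k} y i ≤ 1` for `2 ≤ k ≤ n`. For `y ≥ 0` all of them follow from the one with `k = n`,
so the region is the image of the simplex `{y ≥ 0, ∑ y ≤ 1}`. Slicing along the first coordinate,
the simplex `{y ≥ 0, ∑ y ≤ c}` in dimension `n + 1` has volume
`∫₀^c (c - t)^n / n! dt = c^(n+1) / (n+1)!`.
-/

open Set MeasureTheory Finset

def solidSimplex (n : ℕ) (c : ℝ) : Set (Fin n → ℝ) := {y | (∀ i, 0 ≤ y i) ∧ ∑ i, y i ≤ c}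

lemma measurableSet_solidSimplex (n : ℕ) (c : ℝ) : MeasurableSet (solidSimplex n c) := by
  unfold solidSimplex
  measurability

lemma solidSimplex_eq_empty {n : ℕ} {c : ℝ} (hc : c < 0) : solidSimplex n c = ∅ :=
  eq_empty_iff_forall_notMem.2 fun _ ⟨hy, hsum⟩ =>
    (hsum.trans_lt hc).not_ge (sum_nonneg fun i _ => hy i)

lemma cons_mem_solidSimplex_iff {n : ℕ} {c t : ℝ} {y : Fin n → ℝ} :
    (Fin.cons t y : Fin (n + 1) → ℝ) ∈ solidSimplex (n + 1) c ↔
      0 ≤ t ∧ y ∈ solidSimplex n (c - t) := by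
  simp only [solidSimplex, mem_ofPred_eq, Fin.forall_fin_succ, Fin.cons_zero, Fin.cons_succ,
    Fin.sum_cons, le_sub_iff_add_le', and_assoc]

lemma lintegral_Icc_ofReal_sub_pow (n : ℕ) {c : ℝ} (hc : 0 ≤ c) :
    ∫⁻ t in Icc 0 c, ENNReal.ofReal ((c - t) ^ n) = ENNReal.ofReal (c ^ (n + 1) / (n + 1)) := by
  have hnonneg : 0 ≤ᵐ[volume.restrict (Icc 0 c)] fun t => (c - t) ^ n :=
    (ae_restrict_iff' measurableSet_Icc).2 (ae_of_all _ fun t ht => pow_nonneg (sub_nonneg.2 ht.2) n)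
  rw [← ofReal_integral_eq_lintegral_ofReal
      (by fun_prop : Continuous fun t : ℝ => (c - t) ^ n).integrableOn_Icc hnonneg,
    integral_Icc_eq_integral_Ioc, ← intervalIntegral.integral_of_le hc,
    intervalIntegral.integral_comp_sub_left (fun t => t ^ n), integral_pow]
  simp

lemma volume_cons_preimage_solidSimplex {n : ℕ} {c : ℝ}
    (hvol : ∀ c, 0 ≤ c → volume (solidSimplex n c) = ENNReal.ofReal (c ^ n) / n.factorial)
    (t : ℝ) :
    volume (Fin.cons t ⁻¹' solidSimplex (n + 1) c)
      = (Icc 0 c).indicator (fun t => ENNReal.ofReal ((c - t) ^ n) / n.factorial) t := by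
  simp only [Set.preimage, cons_mem_solidSimplex_iff]
  by_cases ht : t ∈ Icc 0 c
  · rw [indicator_of_mem ht, ← hvol _ (sub_nonneg.2 ht.2)]
    simp [ht.1]
  · rw [indicator_of_notMem ht]
    rcases not_and_or.1 ht with ht | ht
    · simp [ht]
    · simp [solidSimplex_eq_empty (sub_neg.2 (not_le.1 ht))]

theorem volume_solidSimplex (n : ℕ) {c : ℝ} (hc : 0 ≤ c) :
    volume (solidSimplex n c) = ENNReal.ofReal (c ^ n) / n.factorial := by
  induction n generalizing c with
  | zero => simp [solidSimplex, hc, volume_pi]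
  | succ n ih =>
    have hcons := (volume_preserving_piFinSuccAbove (fun _ : Fin (n + 1) => ℝ) 0).symm
    have hslice (t : ℝ) : Prod.mk t ⁻¹' ((MeasurableEquiv.piFinSuccAbove (fun _ => ℝ) 0).symm ⁻¹'
        solidSimplex (n + 1) c) = Fin.cons t ⁻¹' solidSimplex (n + 1) c := by
      ext y
      simp [Fin.consEquiv]
    rw [← hcons.measure_preimage (measurableSet_solidSimplex _ _).nullMeasurableSet,
      Measure.volume_eq_prod,
      Measure.prod_apply ((measurableSet_solidSimplex _ _).preimage hcons.measurable)]
    simp_rw [hslice, volume_cons_preimage_solidSimplex (fun _ => ih),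
      lintegral_indicator measurableSet_Icc, div_eq_mul_inv]
    rw [lintegral_mul_const' _ _ (by simp [Nat.factorial_ne_zero]),
      lintegral_Icc_ofReal_sub_pow n hc, ENNReal.ofReal_div_of_pos (by positivity), div_eq_mul_inv,
      mul_assoc, ← ENNReal.mul_inv (by simp) (by simp), Nat.factorial_succ, Nat.cast_mul,
      ← Nat.cast_succ, ENNReal.ofReal_natCast]

lemma sum_filter_val_lt_one_sub {n k : ℕ} (hk : k ≤ n) (x : Fin n → ℝ) :
    ∑ i ∈ univ.filter (fun i : Fin n => (i : ℕ) < k), (1 - x i)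
      = k - ∑ i ∈ univ.filter (fun i : Fin n => (i : ℕ) < k), x i := by
  rw [sum_sub_distrib, sum_const, Fin.card_filter_val_lt, min_eq_right hk, nsmul_one]

lemma setOf_partialSum_ge_eq_preimage_solidSimplex (n : ℕ) :
    {x : Fin n → ℝ | (∀ i, x i ∈ Icc (0:ℝ) 1) ∧
        ∀ k : ℕ, 2 ≤ k → k ≤ n →
          (k : ℝ) - 1 ≤ ∑ i ∈ univ.filter (fun i : Fin n => (i : ℕ) < k), x i}
      = (fun x => 1 - x) ⁻¹' solidSimplex n 1 := by
  ext x
  simp only [solidSimplex, Set.mem_preimage, mem_ofPred_eq, Pi.sub_apply, Pi.one_apply,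
    sub_nonneg, Set.mem_Icc]
  constructor
  · rintro ⟨hx, hpartial⟩
    refine ⟨fun i => (hx i).2, ?_⟩
    have hfull : (n : ℝ) - 1 ≤ ∑ i, x i := by
      rcases le_or_gt 2 n with hn | hn
      · simpa [Fin.is_lt] using hpartial n hn le_rfl
      · have : (n : ℝ) ≤ 1 := by exact_mod_cast Nat.lt_succ_iff.1 hn
        linarith [sum_nonneg fun i (_ : i ∈ Finset.univ) => (hx i).1]
    have hsum := sum_filter_val_lt_one_sub le_rfl x
    rw [filter_true_of_mem fun i _ => i.is_lt] at hsum
    linarith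
  · rintro ⟨hx, hsum⟩
    have hterm (i : Fin n) : 1 - x i ≤ 1 :=
      (single_le_sum (fun j _ => sub_nonneg.2 (hx j)) (mem_univ i)).trans hsum
    refine ⟨fun i => ⟨by linarith [hterm i], hx i⟩, fun k _ hk => ?_⟩
    have hpartial := sum_le_sum_of_subset_of_nonneg
      (subset_univ (univ.filter (fun i : Fin n => (i : ℕ) < k))) (fun i _ _ => sub_nonneg.2 (hx i))
    rw [sum_filter_val_lt_one_sub hk] at hpartial
    linarith

theorem stmt18 (n : ℕ) :
    MeasureTheory.volume
      {x : Fin n → ℝ | (∀ i, x i ∈ Set.Icc (0:ℝ) 1) ∧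
        ∀ k : ℕ, 2 ≤ k → k ≤ n →
          (k : ℝ) - 1 ≤ ∑ i ∈ Finset.univ.filter (fun i : Fin n => (i : ℕ) < k), x i}
      = (n.factorial : ENNReal)⁻¹ := by
  rw [setOf_partialSum_ge_eq_preimage_solidSimplex,
    (Measure.measurePreserving_sub_left volume 1).measure_preimage
      (measurableSet_solidSimplex n 1).nullMeasurableSet,
    volume_solidSimplex n zero_le_one]
  simp
end
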